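/- Let ℓ ≥ 1, let 1 ≤ b ≤ k ≤ n. Let (σ_1, A_1), …, (σ_ℓ, A_ℓ) be a proper configuration (σ_i ∈ {0,…,b}, A_i ⊆ {1,…,n}, σ_i + |A_i| ≤ k), and suppose gid_k((σ_i,A_i)_i) = 0 and Σ_{i=1}^ℓ (σ_i + |A_i|) < (ℓ−1)·k. Then there exists a minimal expansion (σ'_1, A'_1), …, (σ'_ℓ, A'_ℓ), i.e. σ_i ≤ σ'_i ≤ b and A_i ⊆ A'_i ⊆ {1,…,n} for all i with Σ_{i=1}^ℓ ((σ'_i − σ_i) + (|A'_i| − |A_i|)) = 1, which is again proper and satisfies gid_k((σ'_i,A'_i)_i) = 0. -/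

import Mathlib

open Finset Matrix

noncomputable section

/-- The intersection `⋂_{j ∈ p} A j`, as a `Finset (Fin n)`. -/
def interSet {ℓ n : ℕ} (A : Fin ℓ → Finset (Fin n)) (p : Finset (Fin ℓ)) : Finset (Fin n) :=
  Finset.univ.filter fun x => ∀ j ∈ p, x ∈ A j

/-- The dimension-`m` null intersection property: for every partition of `{1,…,ℓ}`
(presented as a `Finpartition` of `Finset.univ : Finset (Fin ℓ)`) into nonempty parts
`P_1,…,P_s`, we have `Σ_i |⋂_{j ∈ P_i} A_j| ≤ (s-1)·m`. -/
def NullInter {ℓ n : ℕ} (m : ℕ) (A : Fin ℓ → Finset (Fin n)) : Prop :=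
  ∀ P : Finpartition (Finset.univ : Finset (Fin ℓ)),
    ∑ p ∈ P.parts, (interSet A p).card ≤ (P.parts.card - 1) * m

/-- Span of the columns of `M` indexed by `A`. -/
def colSpan {K : Type*} [Field K] {k n : ℕ} (M : Matrix (Fin k) (Fin n) K)
    (A : Finset (Fin n)) : Submodule K (Fin k → K) :=
  Submodule.span K ((fun j i => M i j) '' (A : Set (Fin n)))

/-- Span of the first `σ` columns of `M`. -/
def colSpanLT {K : Type*} [Field K] {k b : ℕ} (M : Matrix (Fin k) (Fin b) K)
    (σ : ℕ) : Submodule K (Fin k → K) :=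
  Submodule.span K ((fun j i => M i j) '' {j : Fin b | (j : ℕ) < σ})

/-- The minimum of `σ` over the set `p` (for nonempty `p`, this is `min_{j ∈ p} σ j`). -/
def partMin {ℓ : ℕ} (σ : Fin ℓ → ℕ) (p : Finset (Fin ℓ)) : ℕ :=
  sInf (σ '' (p : Set (Fin ℓ)))

/-- The generic intersection dimension `gid_m((σ_i, A_i)_i)`: the maximum over all
partitions of `{1,…,ℓ}` into nonempty parts `P_1,…,P_s` of
`-m(s-1) + Σ_i (min_{j ∈ P_i} σ_j + |⋂_{j ∈ P_i} A_j|)`. -/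
def gid {ℓ n : ℕ} (m : ℕ) (σ : Fin ℓ → ℕ) (A : Fin ℓ → Finset (Fin n)) : ℤ :=
  sSup { v : ℤ | ∃ P : Finpartition (Finset.univ : Finset (Fin ℓ)),
    v = -(m : ℤ) * ((P.parts.card : ℤ) - 1)
      + ∑ p ∈ P.parts, ((partMin σ p : ℤ) + ((interSet A p).card : ℤ)) }

/-!
Write `f(p) = min_{j ∈ p} σ_j + |⋂_{j ∈ p} A_j|`, so that a partition `P` scores
`-k(|P| - 1) + Σ_{p ∈ P} f(p)`; `gid_k = 0` says that every partition scores at most `0` and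
some partition is tight (scores exactly `0`).

The function `f` is supermodular on intersecting sets, and this uncrosses tight partitions:
if `R` is a tight partition with the most parts, each part `T` of `R` lies inside every part of a
tight partition `Q` that it meets, since otherwise splitting `T` along `Q` would give a tight
partition with more parts.

Adding one new element `x` to a set `A_i` with `σ_i + |A_i| < k` raises scores by at most one,
and only for partitions whose part `S ∋ i` has `x ∈ ⋂_{j ∈ S \ {i}} A_j`. It suffices to find
such a pair `(i, x)` for which no tight partition is of this kind. If there were none, then within
each part `T` of `R` every element missing from a deficient `A_i` would lie in all other `A_j`,
`j ∈ T`; counting with `n ≥ k` gives `f(T) + k(|T| - 1) ≤ Σ_{i ∈ T} (σ_i + |A_i|)`, and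
summing over the tight partition `R` gives `(ℓ - 1)k ≤ Σ_i (σ_i + |A_i|)`.
-/

namespace Finpartition

variable {α : Type*} [DistribLattice α] [OrderBot α] {a w : α}

theorem disjoint_sup_of_notMem (P : Finpartition a) {C : Finset α} (hC : C ⊆ P.parts)
    {d : α} (hd : d ∈ P.parts) (hdC : d ∉ C) : Disjoint d (C.sup id) :=
  Finset.disjoint_sup_right.2 fun _ hc ↦
    P.disjoint hd (hC hc) fun h ↦ hdC (h ▸ hc)

variable [DecidableEq α]

def replaceParts (P : Finpartition a) {C : Finset α} (hC : C ⊆ P.parts) (hw : C.sup id = w)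
    (X : Finpartition w) : Finpartition a where
  parts := (P.parts \ C) ∪ X.parts
  supIndep := by
    rw [Finset.supIndep_iff_pairwiseDisjoint]
    intro d hd e he hde
    simp only [Finset.coe_union, Finset.coe_sdiff, Set.mem_union, Set.mem_sdiff,
      Finset.mem_coe] at hd he
    rcases hd with ⟨hdP, hdC⟩ | hdX <;> rcases he with ⟨heP, heC⟩ | heX
    · exact P.disjoint hdP heP hde
    · exact (hw ▸ P.disjoint_sup_of_notMem hC hdP hdC).mono_right (X.le heX)
    · exact ((hw ▸ P.disjoint_sup_of_notMem hC heP heC).mono_right (X.le hdX)).symm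
    · exact X.disjoint hdX heX hde
  sup_parts := by
    rw [Finset.sup_union, X.sup_parts, ← hw, ← Finset.sup_union,
      Finset.sdiff_union_of_subset hC, P.sup_parts]
  bot_notMem h := (Finset.mem_union.1 h).elim
    (fun h ↦ P.bot_notMem (Finset.mem_sdiff.1 h).1) X.bot_notMem

theorem disjoint_replaceParts (P : Finpartition a) {C : Finset α} (hC : C ⊆ P.parts)
    (hw : C.sup id = w) (X : Finpartition w) : Disjoint (P.parts \ C) X.parts :=
  Finset.disjoint_left.2 fun _ hd hdX ↦ X.ne_bot hdX <| disjoint_self.1 <|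
    (hw ▸ P.disjoint_sup_of_notMem hC (Finset.mem_sdiff.1 hd).1 (Finset.mem_sdiff.1 hd).2)
      |>.mono_right (X.le hdX)

theorem card_replaceParts (P : Finpartition a) {C : Finset α} (hC : C ⊆ P.parts)
    (hw : C.sup id = w) (X : Finpartition w) :
    #(P.replaceParts hC hw X).parts + #C = #P.parts + #X.parts := by
  have := Finset.card_sdiff_add_card_eq_card hC
  rw [replaceParts, Finset.card_union_of_disjoint (P.disjoint_replaceParts hC hw X)]
  omega

theorem sum_replaceParts {M : Type*} [AddCommMonoid M] (P : Finpartition a) {C : Finset α}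
    (hC : C ⊆ P.parts) (hw : C.sup id = w) (X : Finpartition w) (f : α → M) :
    ∑ p ∈ (P.replaceParts hC hw X).parts, f p + ∑ p ∈ C, f p
      = ∑ p ∈ P.parts, f p + ∑ p ∈ X.parts, f p := by
  rw [replaceParts, Finset.sum_union (P.disjoint_replaceParts hC hw X), add_right_comm,
    Finset.sum_sdiff hC]

theorem sum_restrict_eq_sum_filter {M : Type*} [AddCommMonoid M] (P : Finpartition a)
    (hw : w ≤ a) (f : α → M) :
    ∑ p ∈ (P.restrict hw).parts, f p = ∑ q ∈ P.parts with q ⊓ w ≠ ⊥, f (q ⊓ w) := by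
  have := P.sum_restrict hw (fun p ↦ if p = ⊥ then 0 else f p) (if_pos rfl)
  rw [Finset.sum_congr rfl fun p hp ↦ if_neg ((P.restrict hw).ne_bot hp)] at this
  rw [this, Finset.sum_filter]
  simp only [ne_eq, ite_not]

theorem card_restrict (P : Finpartition a) (hw : w ≤ a) :
    #(P.restrict hw).parts = #{q ∈ P.parts | q ⊓ w ≠ ⊥} := by
  simp only [card_eq_sum_ones, sum_restrict_eq_sum_filter]

theorem sum_sum_parts {β M : Type*} [DecidableEq β] [AddCommMonoid M] {s : Finset β}
    (P : Finpartition s) (f : β → M) : ∑ t ∈ P.parts, ∑ i ∈ t, f i = ∑ i ∈ s, f i := by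
  conv_rhs => rw [← P.biUnion_parts]
  exact (sum_biUnion P.disjoint).symm

end Finpartition

theorem Finset.sum_add_le_sum_inf_add_sup {α M : Type*} [DistribLattice α] [OrderBot α]
    [DecidableEq α] [AddCommMonoid M] [PartialOrder M] [IsOrderedAddMonoid M] {f : α → M}
    (hf : ∀ p q, p ⊓ q ≠ ⊥ → f p + f q ≤ f (p ⊓ q) + f (p ⊔ q)) (t : α) {D : Finset α}
    (hD : (D : Set α).PairwiseDisjoint id) (hDt : ∀ q ∈ D, q ⊓ t ≠ ⊥) :
    ∑ q ∈ D, f q + f t ≤ ∑ q ∈ D, f (q ⊓ t) + f (t ⊔ D.sup id) := by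
  induction D using Finset.induction_on with
  | empty => simp
  | insert q D hq ih =>
    rw [Finset.coe_insert] at hD
    have hqD : Disjoint q (D.sup id) := Finset.disjoint_sup_right.2 fun r hr ↦
      hD (Set.mem_insert q _) (Set.mem_insert_of_mem q hr) fun h ↦ hq (h ▸ hr)
    have hinf : q ⊓ (t ⊔ D.sup id) = q ⊓ t := by
      rw [inf_sup_left, hqD.eq_bot, sup_bot_eq]
    have ih := ih (hD.subset (Set.subset_insert q _))
      fun r hr ↦ hDt r (Finset.mem_insert_of_mem hr)
    have hsuper := hf q (t ⊔ D.sup id) (hinf ▸ hDt q (Finset.mem_insert_self q D))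
    rw [hinf, sup_left_comm] at hsuper
    calc ∑ r ∈ insert q D, f r + f t = f q + (∑ r ∈ D, f r + f t) := by
          rw [Finset.sum_insert hq, add_assoc]
      _ ≤ f q + (∑ r ∈ D, f (r ⊓ t) + f (t ⊔ D.sup id)) := by gcongr
      _ = ∑ r ∈ D, f (r ⊓ t) + (f q + f (t ⊔ D.sup id)) := by abel
      _ ≤ ∑ r ∈ D, f (r ⊓ t) + (f (q ⊓ t) + f (t ⊔ (q ⊔ D.sup id))) := by gcongr
      _ = ∑ r ∈ insert q D, f (r ⊓ t) + f (t ⊔ (insert q D).sup id) := by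
          rw [Finset.sum_insert hq, Finset.sup_insert, id, add_left_comm, add_assoc]

section Configuration

variable {ℓ n k : ℕ} {σ : Fin ℓ → ℕ} {A : Fin ℓ → Finset (Fin n)}

@[simp]
theorem mem_interSet {p : Finset (Fin ℓ)} {x : Fin n} :
    x ∈ interSet A p ↔ ∀ j ∈ p, x ∈ A j := by
  simp [interSet]

theorem interSet_anti {p q : Finset (Fin ℓ)} (h : p ⊆ q) : interSet A q ⊆ interSet A p :=
  fun _ hx ↦ mem_interSet.2 fun j hj ↦ mem_interSet.1 hx j (h hj)

theorem interSet_union (p q : Finset (Fin ℓ)) :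
    interSet A (p ∪ q) = interSet A p ∩ interSet A q := by
  ext x
  simp only [mem_interSet, mem_union, mem_inter]
  grind

theorem interSet_insert (i : Fin ℓ) (p : Finset (Fin ℓ)) :
    interSet A (insert i p) = A i ∩ interSet A p := by
  ext x
  simp

theorem interSet_singleton (i : Fin ℓ) : interSet A {i} = A i := by
  ext x
  simp

theorem card_interSet_add_card_interSet_le (p q : Finset (Fin ℓ)) :
    #(interSet A p) + #(interSet A q) ≤ #(interSet A (p ∩ q)) + #(interSet A (p ∪ q)) := by
  have hsub : interSet A p ∪ interSet A q ⊆ interSet A (p ∩ q) :=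
    union_subset (interSet_anti inter_subset_left) (interSet_anti inter_subset_right)
  rw [interSet_union, ← card_union_add_card_inter]
  exact Nat.add_le_add_right (card_le_card hsub) _

theorem partMin_le {p : Finset (Fin ℓ)} {i : Fin ℓ} (h : i ∈ p) : partMin σ p ≤ σ i :=
  Nat.sInf_le ⟨i, h, rfl⟩

theorem exists_partMin_eq {p : Finset (Fin ℓ)} (hp : p.Nonempty) :
    ∃ i ∈ p, partMin σ p = σ i := by
  obtain ⟨j, hj, hje⟩ := Nat.sInf_mem ((coe_nonempty.2 hp).image σ)
  exact ⟨j, hj, hje.symm⟩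

theorem partMin_anti {p q : Finset (Fin ℓ)} (hp : p.Nonempty) (h : p ⊆ q) :
    partMin σ q ≤ partMin σ p := by
  obtain ⟨i, hi, he⟩ := exists_partMin_eq (σ := σ) hp
  exact he ▸ partMin_le (h hi)

theorem partMin_singleton (i : Fin ℓ) : partMin σ {i} = σ i := by
  simp [partMin]

theorem partMin_add_partMin_le {p q : Finset (Fin ℓ)} (h : (p ∩ q).Nonempty) :
    partMin σ p + partMin σ q ≤ partMin σ (p ∩ q) + partMin σ (p ∪ q) := by
  have hpq : (p ∪ q).Nonempty := h.mono (inter_subset_left.trans subset_union_left)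
  obtain ⟨j, hj, hje⟩ := exists_partMin_eq (σ := σ) hpq
  rcases mem_union.1 hj with hjp | hjq
  · have := partMin_anti (σ := σ) h inter_subset_right
    have := partMin_le (σ := σ) hjp
    omega
  · have := partMin_anti (σ := σ) h inter_subset_left
    have := partMin_le (σ := σ) hjq
    omega

variable (σ A) in
def partScore (p : Finset (Fin ℓ)) : ℤ :=
  partMin σ p + #(interSet A p)

theorem partScore_singleton (i : Fin ℓ) : partScore σ A {i} = σ i + #(A i) := by
  rw [partScore, partMin_singleton, interSet_singleton]

theorem partScore_anti {p q : Finset (Fin ℓ)} (hp : p.Nonempty) (h : p ⊆ q) :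
    partScore σ A q ≤ partScore σ A p := by
  have := partMin_anti (σ := σ) hp h
  have := card_le_card (interSet_anti (A := A) h)
  rw [partScore, partScore]
  omega

theorem partScore_add_le {p q : Finset (Fin ℓ)} (h : (p ∩ q).Nonempty) :
    partScore σ A p + partScore σ A q ≤ partScore σ A (p ∩ q) + partScore σ A (p ∪ q) := by
  have := partMin_add_partMin_le (σ := σ) h
  have := card_interSet_add_card_interSet_le (A := A) p q
  simp only [partScore]
  omega

theorem partScore_insert_add_le {a : Fin ℓ} {p : Finset (Fin ℓ)} (hp : p.Nonempty)
    (hcover : A a ∪ interSet A p = univ) :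
    partScore σ A (insert a p) + n ≤ partScore σ A p + #(A a) := by
  have hmin := partMin_anti (σ := σ) hp (subset_insert a p)
  have hcard := card_union_add_card_inter (A a) (interSet A p)
  rw [hcover, card_univ, Fintype.card_fin] at hcard
  rw [partScore, partScore, interSet_insert]
  omega

variable (k σ A) in
def partitionScore (P : Finpartition (univ : Finset (Fin ℓ))) : ℤ :=
  -(k : ℤ) * (#P.parts - 1) + ∑ p ∈ P.parts, partScore σ A p

theorem gid_eq_iSup : gid k σ A = ⨆ P, partitionScore k σ A P := by
  rw [gid, iSup]
  congr 1
  ext v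
  simp only [Set.mem_ofPred_eq, Set.mem_range, partitionScore, partScore, eq_comm]

theorem gid_eq_zero_iff :
    gid k σ A = 0 ↔ (∀ P, partitionScore k σ A P ≤ 0) ∧ ∃ P, partitionScore k σ A P = 0 := by
  have hbdd := (Set.finite_range (partitionScore k σ A)).bddAbove
  rw [gid_eq_iSup]
  constructor
  · intro h
    obtain ⟨P, hP⟩ := exists_eq_ciSup_of_finite (f := partitionScore k σ A)
    exact ⟨fun P ↦ h ▸ le_ciSup hbdd P, P, hP.trans h⟩
  · rintro ⟨hle, P, hP⟩
    exact le_antisymm (ciSup_le hle) (hP ▸ le_ciSup hbdd P)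

theorem partitionScore_replaceParts (P : Finpartition (univ : Finset (Fin ℓ)))
    {C : Finset (Finset (Fin ℓ))} (hC : C ⊆ P.parts) {w : Finset (Fin ℓ)} (hw : C.sup id = w)
    (X : Finpartition w) :
    partitionScore k σ A (P.replaceParts hC hw X) = partitionScore k σ A P
      + ∑ p ∈ X.parts, partScore σ A p - ∑ p ∈ C, partScore σ A p
      - k * (#X.parts - #C) := by
  have hcard : (#(P.replaceParts hC hw X).parts : ℤ) + #C = #P.parts + #X.parts := by
    exact_mod_cast P.card_replaceParts hC hw X
  have hsum := P.sum_replaceParts hC hw X (partScore σ A)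
  simp only [partitionScore]
  linear_combination hsum - (k : ℤ) * hcard

theorem sum_partScore_add_eq (P : Finpartition (univ : Finset (Fin ℓ))) :
    ∑ T ∈ P.parts, (partScore σ A T + k * (#T - 1)) = partitionScore k σ A P + k * (ℓ - 1) := by
  have hcard : ∑ T ∈ P.parts, (#T : ℤ) = ℓ := by
    rw [← Nat.cast_sum, P.sum_card_parts, card_univ, Fintype.card_fin]
  rw [partitionScore, sum_add_distrib, ← mul_sum, sum_sub_distrib, hcard, sum_const,
    nsmul_one]
  ring

theorem subset_of_partitionScore_eq_zero (hle : ∀ P, partitionScore k σ A P ≤ 0)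
    {R Q : Finpartition (univ : Finset (Fin ℓ))} (hR : partitionScore k σ A R = 0)
    (hmax : ∀ P, partitionScore k σ A P = 0 → #P.parts ≤ #R.parts)
    (hQ : partitionScore k σ A Q = 0) {T S : Finset (Fin ℓ)} (hT : T ∈ R.parts)
    (hS : S ∈ Q.parts) (hST : (S ∩ T).Nonempty) : T ⊆ S := by
  by_contra hTS
  obtain ⟨t, htT, htS⟩ := not_subset.1 hTS
  obtain ⟨q, hq, htq⟩ := Q.exists_mem (mem_univ t)
  set C := Q.parts.filter (fun q ↦ q ⊓ T ≠ ⊥) with hCdef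
  have hCQ : C ⊆ Q.parts := filter_subset _ _
  have hC : 1 < #C := one_lt_card.2 ⟨S, mem_filter.2 ⟨hS, hST.ne_empty⟩,
    q, mem_filter.2 ⟨hq, ne_empty_of_mem (mem_inter.2 ⟨htq, htT⟩)⟩,
    fun h ↦ htS (h ▸ htq)⟩
  have hTW : T ⊆ C.sup id := fun u hu ↦ by
    obtain ⟨q, hq, huq⟩ := Q.exists_mem (mem_univ u)
    exact mem_sup.2 ⟨q, mem_filter.2 ⟨hq, ne_empty_of_mem (mem_inter.2 ⟨huq, hu⟩)⟩, huq⟩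
  have hW : C.sup id ≠ ⊥ := ((R.nonempty_of_mem_parts hT).mono hTW).ne_empty
  have hmerge := hle (Q.replaceParts hCQ rfl (.indiscrete hW))
  rw [partitionScore_replaceParts, hQ] at hmerge
  simp only [Finpartition.indiscrete_parts, sum_singleton, card_singleton] at hmerge
  have hsuper : ∀ p q : Finset (Fin ℓ), p ⊓ q ≠ ⊥ → partScore σ A p + partScore σ A q ≤
      partScore σ A (p ⊓ q) + partScore σ A (p ⊔ q) :=
    fun p q h ↦ partScore_add_le (nonempty_iff_ne_empty.2 h)
  have htele := sum_add_le_sum_inf_add_sup hsuper T (Q.disjoint.subset hCQ)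
    fun q hq ↦ (mem_filter.1 hq).2
  rw [sup_eq_right.2 hTW] at htele
  -- by `hmerge` and `htele`, splitting `T` along `Q` keeps `R` tight but adds `#C - 1` parts
  have hscore := partitionScore_replaceParts (k := k) (σ := σ) (A := A) R (w := T)
    (singleton_subset_iff.2 hT) sup_singleton (Q.restrict (subset_univ T))
  have hcard := R.card_replaceParts (w := T) (singleton_subset_iff.2 hT) sup_singleton
    (Q.restrict (subset_univ T))
  rw [Finpartition.card_restrict, ← hCdef] at hscore hcard
  rw [hR, Finpartition.sum_restrict_eq_sum_filter, ← hCdef, sum_singleton, card_singleton]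
    at hscore
  have := hmax _ (le_antisymm (hle _) (by rw [hscore]; push_cast at hmerge ⊢; linarith))
  rw [card_singleton] at hcard
  omega

theorem partScore_add_le_sum (hkn : k ≤ n) (hproper : ∀ i, σ i + #(A i) ≤ k)
    {T : Finset (Fin ℓ)} (hT : T.Nonempty)
    (hcover : ∀ i ∈ T, σ i + #(A i) < k → ∀ j ∈ T, j ≠ i → (A i)ᶜ ⊆ A j) :
    partScore σ A T + k * (#T - 1) ≤ ∑ i ∈ T, ((σ i : ℤ) + #(A i)) := by
  induction hT using Nonempty.cons_induction with
  | singleton a => simp [partScore_singleton]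
  | cons a T haT hT ih =>
    rw [cons_eq_insert] at hcover ⊢
    have ih := ih fun i hi hdef j hj ↦
      hcover i (mem_insert_of_mem hi) hdef j (mem_insert_of_mem hj)
    rw [sum_insert haT, card_insert_of_notMem haT]
    have hkn : (k : ℤ) ≤ n := by exact_mod_cast hkn
    by_cases hdef : σ a + #(A a) < k
    · have hunion : A a ∪ interSet A T = univ := eq_univ_of_forall fun x ↦ by
        by_cases hx : x ∈ A a
        · exact mem_union_left _ hx
        · refine mem_union_right _ (mem_interSet.2 fun j hj ↦ ?_)
          exact hcover a (mem_insert_self a T) hdef j (mem_insert_of_mem hj)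
            (fun h ↦ haT (h ▸ hj)) (mem_compl.2 hx)
      have := partScore_insert_add_le (σ := σ) hT hunion
      push_cast
      linarith
    · have hfull : ((σ a : ℤ) + #(A a)) = k := by
        have := hproper a
        exact_mod_cast (by omega : σ a + #(A a) = k)
      have := partScore_anti (σ := σ) (A := A) hT (subset_insert a T)
      push_cast
      linarith

theorem exists_increment_preserving_tight (hℓ : 1 ≤ ℓ) (hkn : k ≤ n)
    (hproper : ∀ i, σ i + #(A i) ≤ k) (hlt : ∑ i, (σ i + #(A i)) < (ℓ - 1) * k)
    (hle : ∀ P, partitionScore k σ A P ≤ 0) {R : Finpartition (univ : Finset (Fin ℓ))}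
    (hR : partitionScore k σ A R = 0)
    (hmax : ∀ P, partitionScore k σ A P = 0 → #P.parts ≤ #R.parts) :
    ∃ i x, σ i + #(A i) < k ∧ x ∉ A i ∧ ∀ P, partitionScore k σ A P = 0 →
      ∀ S ∈ P.parts, i ∈ S → x ∉ interSet A (S.erase i) := by
  by_contra! h
  have hpart : ∀ T ∈ R.parts,
      partScore σ A T + k * (#T - 1) ≤ ∑ i ∈ T, ((σ i : ℤ) + #(A i)) := fun T hT ↦
    partScore_add_le_sum hkn hproper (R.nonempty_of_mem_parts hT)
      fun i hi hdef j hj hji x hx ↦ by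
        obtain ⟨P, hP, S, hS, hiS, hxS⟩ := h i x hdef (mem_compl.1 hx)
        have hTS := subset_of_partitionScore_eq_zero hle hR hmax hP hT hS
          ⟨i, mem_inter.2 ⟨hiS, hi⟩⟩
        exact mem_interSet.1 hxS j (mem_erase.2 ⟨hji, hTS hj⟩)
  have hsum := sum_le_sum hpart
  rw [sum_partScore_add_eq, hR, R.sum_sum_parts] at hsum
  have hlt : ∑ i, ((σ i : ℤ) + #(A i)) < ((ℓ - 1 : ℕ) : ℤ) * k := by exact_mod_cast hlt
  push_cast [Nat.cast_sub hℓ] at hlt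
  linarith

variable {i : Fin ℓ} {x : Fin n}

theorem interSet_update_insert_subset (p : Finset (Fin ℓ)) :
    interSet (Function.update A i (insert x (A i))) p ⊆ insert x (interSet A p) := by
  intro y
  simp only [mem_interSet, mem_insert, Function.update_apply]
  grind

theorem interSet_update_insert_of_notMem {p : Finset (Fin ℓ)}
    (hx : i ∈ p → x ∉ interSet A (p.erase i)) :
    interSet (Function.update A i (insert x (A i))) p = interSet A p := by
  ext y
  simp only [mem_interSet, mem_erase, Function.update_apply] at hx ⊢
  grind

theorem partitionScore_update_insert_of_notMem {P : Finpartition (univ : Finset (Fin ℓ))}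
    (hx : ∀ S ∈ P.parts, i ∈ S → x ∉ interSet A (S.erase i)) :
    partitionScore k σ (Function.update A i (insert x (A i))) P = partitionScore k σ A P := by
  simp only [partitionScore, partScore]
  congr 1
  exact sum_congr rfl fun S hS ↦ by rw [interSet_update_insert_of_notMem (hx S hS)]

theorem partitionScore_update_insert_le (P : Finpartition (univ : Finset (Fin ℓ))) :
    partitionScore k σ (Function.update A i (insert x (A i))) P
      ≤ partitionScore k σ A P + 1 := by
  obtain ⟨S, hS, hiS⟩ := P.exists_mem (mem_univ i)
  have hdiff : ∑ p ∈ P.parts, partScore σ (Function.update A i (insert x (A i))) p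
      - ∑ p ∈ P.parts, partScore σ A p
      = partScore σ (Function.update A i (insert x (A i))) S - partScore σ A S := by
    rw [← sum_sub_distrib]
    refine sum_eq_single_of_mem S hS fun p hp hpS ↦ ?_
    rw [partScore, partScore, interSet_update_insert_of_notMem fun hip ↦
      (hpS (P.eq_of_mem_parts hp hS hip hiS)).elim, sub_self]
  have hS : partScore σ (Function.update A i (insert x (A i))) S ≤ partScore σ A S + 1 := by
    have := (card_le_card (interSet_update_insert_subset (A := A) (i := i) (x := x) S)).trans
      (card_insert_le _ _)
    simp only [partScore]
    omega
  simp only [partitionScore] at hdiff hS ⊢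
  linarith

theorem gid_update_insert_eq_zero (hle : ∀ P, partitionScore k σ A P ≤ 0)
    {R : Finpartition (univ : Finset (Fin ℓ))} (hR : partitionScore k σ A R = 0)
    (hx : ∀ P, partitionScore k σ A P = 0 → ∀ S ∈ P.parts, i ∈ S → x ∉ interSet A (S.erase i)) :
    gid k σ (Function.update A i (insert x (A i))) = 0 := by
  refine gid_eq_zero_iff.2 ⟨fun P ↦ ?_, R, ?_⟩
  · by_cases hP : partitionScore k σ A P = 0
    · exact (partitionScore_update_insert_of_notMem (hx P hP)).trans hP |>.le
    · have := partitionScore_update_insert_le (σ := σ) (A := A) (k := k) (i := i) (x := x) P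
      have := hle P
      omega
  · exact (partitionScore_update_insert_of_notMem (hx R hR)).trans hR

end Configuration

theorem exists_minimal_expansion_general
    (ℓ k n b : ℕ) (hℓ : 1 ≤ ℓ) (hkn : k ≤ n)
    (σ : Fin ℓ → ℕ) (A : Fin ℓ → Finset (Fin n))
    (hσ : ∀ i, σ i ≤ b) (hproper : ∀ i, σ i + (A i).card ≤ k)
    (hgid : gid k σ A = 0)
    (hlt : (∑ i, (σ i + (A i).card)) < (ℓ - 1) * k) :
    ∃ (σ' : Fin ℓ → ℕ) (A' : Fin ℓ → Finset (Fin n)),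
      (∀ i, σ i ≤ σ' i) ∧ (∀ i, σ' i ≤ b) ∧ (∀ i, A i ⊆ A' i) ∧
      (∀ i, σ' i + (A' i).card ≤ k) ∧
      (∑ i, ((σ' i - σ i) + ((A' i).card - (A i).card))) = 1 ∧
      gid k σ' A' = 0 := by
  classical
  obtain ⟨hle, htight⟩ := gid_eq_zero_iff.1 hgid
  obtain ⟨R, hR, hmax⟩ := exists_max_image {P | partitionScore k σ A P = 0} (#·.parts)
    (htight.imp fun P hP ↦ mem_filter.2 ⟨mem_univ P, hP⟩)
  simp only [mem_filter, mem_univ, true_and] at hR hmax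
  obtain ⟨i, x, hdef, hxA, hx⟩ :=
    exists_increment_preserving_tight hℓ hkn hproper hlt hle hR hmax
  have hcard : #(insert x (A i)) = #(A i) + 1 := card_insert_of_notMem hxA
  refine ⟨σ, Function.update A i (insert x (A i)), fun _ ↦ le_rfl, hσ, fun j ↦ ?_, fun j ↦ ?_,
    ?_, gid_update_insert_eq_zero hle hR hx⟩
  · rcases eq_or_ne j i with rfl | hji
    · simp
    · simp [hji]
  · rcases eq_or_ne j i with rfl | hji
    · simp only [Function.update_self, hcard]
      omega
    · simpa [hji] using hproper j
  · rw [sum_eq_single i fun j _ hji ↦ by simp [hji]]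
    · simp [hcard]
    · simp

/-- Minimal expansions preserving `gid = 0`: if a proper configuration has `gid_k = 0`
and total size strictly less than `(ℓ-1)k`, there is a minimal expansion which is again
proper and has `gid_k = 0`. -/
theorem exists_minimal_expansion
    (ℓ k n b : ℕ) (hℓ : 1 ≤ ℓ) (hb : 1 ≤ b) (hbk : b ≤ k) (hkn : k ≤ n)
    (σ : Fin ℓ → ℕ) (A : Fin ℓ → Finset (Fin n))
    (hσ : ∀ i, σ i ≤ b) (hproper : ∀ i, σ i + (A i).card ≤ k)
    (hgid : gid k σ A = 0)
    (hlt : (∑ i, (σ i + (A i).card)) < (ℓ - 1) * k) :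
    ∃ (σ' : Fin ℓ → ℕ) (A' : Fin ℓ → Finset (Fin n)),
      (∀ i, σ i ≤ σ' i) ∧ (∀ i, σ' i ≤ b) ∧ (∀ i, A i ⊆ A' i) ∧
      (∀ i, σ' i + (A' i).card ≤ k) ∧
      (∑ i, ((σ' i - σ i) + ((A' i).card - (A i).card))) = 1 ∧
      gid k σ' A' = 0 :=
  exists_minimal_expansion_general ℓ k n b hℓ hkn σ A hσ hproper hgid hlt
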